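/- Let k ≥ 1, let r be an odd integer, let a and b be integers divisible by 4, and let d be an integer with d·(1+ab) ≡ 1 (mod 2^k). Then for all integers x and y: ∑_{z mod 2^k} e( r(−bz² + 2z(y−dx) + a d² x²)/2^k ) = ∑_{z mod 2^k} e( r(−(1+ab)·b·z² + 2z(y−x) + a d y²)/2^k ). -/

import Mathlib

/-!
Since `4 ∣ a` and `4 ∣ b`, `1 + ab ≡ 1 (mod 16)` has a `2`-adic square root `u ≡ 1 (mod 4)`, and
then `d ≡ u⁻²`. The substitution `z = u t + s` with `s = (a/2) ((u+1)/2)⁻¹ u⁻¹ (y + u⁻¹ x)` turns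
the first quadratic phase into the second, and permutes the residues modulo `2^k` as `u` is a unit.
The halves `a/2` and `(u+1)/2` make sense modulo `2^k` only through the identity
`(u - 1) (u + 1)/2 = (a/2) b`, which needs `u² ≡ 1 + ab` modulo `2^(k+1)`.
-/

open Complex Finset

/-- `e(x) = exp(2πix)`. -/
noncomputable def eC (x : ℂ) : ℂ := Complex.exp (2 * Real.pi * Complex.I * x)

theorem Int.exists_sq_modEq_two_pow {c : ℤ} (hc : c ≡ 1 [ZMOD 8]) (n : ℕ) :
    ∃ u : ℤ, u ≡ 1 [ZMOD 4] ∧ u ^ 2 ≡ c [ZMOD 2 ^ (n + 3)] := by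
  simp only [Int.modEq_iff_dvd]
  induction n with
  | zero => exact ⟨1, by simp, by simpa using hc.symm.dvd⟩
  | succ n ih =>
    obtain ⟨u, ⟨w, hw⟩, t, ht⟩ := ih
    rcases Int.even_or_odd t with ⟨t', rfl⟩ | ⟨t', rfl⟩
    · exact ⟨u, ⟨w, hw⟩, t', by linear_combination ht⟩
    · -- `t` and `u` are both odd, so adding `2 ^ (n + 2)` to `u` clears the next binary digit
      refine ⟨u + 2 ^ (n + 2), ⟨w - 2 ^ n, by linear_combination hw⟩,
        t' + 2 * w - 2 ^ n, ?_⟩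
      linear_combination ht + 2 ^ (n + 3) * hw

theorem exists_phase_affine_subst {R : Type*} [CommRing R] {a b d α u : R} {v : Rˣ}
    (ha : a = 2 * α) (hu : u + 1 = 2 * v) (huv : (u - 1) * v = α * b) (hd : d * (1 + a * b) = 1)
    (x y : R) : ∃ s : R, ∀ t : R,
      -b * (u * t + s) ^ 2 + 2 * (u * t + s) * (y - d * x) + a * d ^ 2 * x ^ 2
        = -(1 + a * b) * b * t ^ 2 + 2 * t * (y - x) + a * d * y ^ 2 := by
  set U := d * u
  set P := y + U * x
  set s := α * ↑v⁻¹ * U * P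
  refine ⟨s, fun t ↦ ?_⟩
  have hsq : u ^ 2 = 1 + a * b := by linear_combination (u - 1) * hu + 2 * huv - b * ha
  have hdu : d * u ^ 2 = 1 := hsq ▸ hd
  have hv : (v : R) * ↑v⁻¹ = 1 := v.mul_inv
  have hbs : b * s = (1 - U) * P := by
    linear_combination (-↑v⁻¹ * U * P) * huv + (u - 1) * U * P * hv + P * hdu
  have hlin : u * (y - d * x - b * s) = y - x := by
    linear_combination (-u) * hbs + (y - x + U * x) * hdu
  -- by `hbs` the constant term is `s (1 + u⁻¹) (y - u⁻¹ x) + a d² x²`,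
  -- and `1 + u⁻¹ = 2 v u⁻¹` makes `s (1 + u⁻¹) = a d P`
  have hconst : -b * s ^ 2 + 2 * s * (y - d * x) + a * d ^ 2 * x ^ 2 = a * d * y ^ 2 := by
    linear_combination (-s) * hbs
      + (2 * s * d * x - a * d ^ 2 * x ^ 2 + (y - U * x) * (a * d * P - α * ↑v⁻¹ * U * P)) * hdu
      + (y - U * x) * α * ↑v⁻¹ * U ^ 2 * P * hu - (y - U * x) * U ^ 2 * P * ha
      + 2 * α * U ^ 2 * P * (y - U * x) * hv
  linear_combination (-b * t ^ 2) * hsq + 2 * t * hlin + hconst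

theorem sum_phase_eq_sum_phase {R M : Type*} [CommRing R] [Fintype R] [AddCommMonoid M]
    (ψ : R → M) {a b d α u : R} {v : Rˣ} (ha : a = 2 * α) (hu : u + 1 = 2 * v)
    (huv : (u - 1) * v = α * b) (hd : d * (1 + a * b) = 1) (r x y : R) :
    ∑ z, ψ (r * (-b * z ^ 2 + 2 * z * (y - d * x) + a * d ^ 2 * x ^ 2))
      = ∑ z, ψ (r * (-(1 + a * b) * b * z ^ 2 + 2 * z * (y - x) + a * d * y ^ 2)) := by
  obtain ⟨s, hs⟩ := exists_phase_affine_subst ha hu huv hd x y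
  have hunit : IsUnit u :=
    .of_mul_eq_one (d * u) (by linear_combination d * ((u - 1) * hu + 2 * huv - b * ha) + hd)
  lift u to Rˣ using hunit
  rw [← Equiv.sum_comp (Equiv.addRight s), ← Equiv.sum_comp (Units.mulLeft u)]
  simp only [Equiv.coe_addRight, Units.mulLeft_apply, hs]

theorem exists_sqrt_one_add_mul_halves (k : ℕ) {a b : ℤ} (ha : 4 ∣ a) (hb : 4 ∣ b) :
    ∃ (α u : ZMod (2 ^ k)) (v : (ZMod (2 ^ k))ˣ),
      (a : ZMod (2 ^ k)) = 2 * α ∧ u + 1 = 2 * v ∧ (u - 1) * v = α * b := by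
  obtain ⟨a, rfl⟩ := ha
  obtain ⟨b, rfl⟩ := hb
  obtain ⟨u, hu, hsq⟩ := Int.exists_sq_modEq_two_pow (c := 1 + 4 * a * (4 * b))
    (Int.modEq_iff_dvd.2 ⟨-2 * a * b, by ring⟩) k
  obtain ⟨w, hw⟩ := hu.symm.dvd
  obtain rfl : u = 1 + 4 * w := by linear_combination hw
  obtain ⟨q, hq⟩ := hsq.symm.dvd
  have hv : IsCoprime (1 + 2 * w) ((2 ^ k : ℕ) : ℤ) := by
    push_cast
    exact (Int.isCoprime_two_right.2 ⟨w, by ring⟩).pow_right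
  have huv : ((2 ^ k : ℕ) : ℤ) ∣ 4 * w * (1 + 2 * w) - 2 * a * (4 * b) :=
    ⟨4 * q, mul_left_cancel₀ two_ne_zero (by push_cast; linear_combination hq)⟩
  refine ⟨2 * a, 1 + 4 * w, ZMod.unitOfIsCoprime _ hv, by push_cast; ring, ?_, ?_⟩
  · rw [ZMod.coe_unitOfIsCoprime]
    push_cast
    ring
  · rw [ZMod.coe_unitOfIsCoprime]
    have := (ZMod.intCast_zmod_eq_zero_iff_dvd _ _).2 huv
    push_cast at this ⊢
    linear_combination this

theorem sum_range_eC_eq_sum_stdAddChar (N : ℕ) [NeZero N] (f : ℤ → ℤ) (F : ZMod N → ZMod N)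
    (hF : ∀ z : ℤ, (f z : ZMod N) = F z) :
    ∑ z ∈ range N, eC (f z / N) = ∑ t : ZMod N, ZMod.stdAddChar (F t) := by
  refine sum_nbij' (fun z ↦ (z : ZMod N)) ZMod.val (fun _ _ ↦ mem_univ _)
    (fun t _ ↦ mem_range.2 t.val_lt) (fun z hz ↦ ZMod.val_cast_of_lt (mem_range.1 hz))
    (fun t _ ↦ ZMod.natCast_zmod_val t) fun z _ ↦ ?_
  rw [← Int.cast_natCast (R := ZMod N), ← hF, ZMod.stdAddChar_coe, eC, mul_div_assoc]

theorem gauss_sum_identity_general (k : ℕ) (r a b d : ℤ)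
    (ha : 4 ∣ a) (hb : 4 ∣ b) (hd : d * (1 + a * b) ≡ 1 [ZMOD (2 ^ k : ℤ)])
    (x y : ℤ) :
    ∑ z ∈ Finset.range (2 ^ k),
        eC ((r : ℂ) * (-(b : ℂ) * (z : ℂ) ^ 2 + 2 * (z : ℂ) * ((y : ℂ) - (d : ℂ) * (x : ℂ))
            + (a : ℂ) * (d : ℂ) ^ 2 * (x : ℂ) ^ 2) / (2 ^ k : ℂ)) =
      ∑ z ∈ Finset.range (2 ^ k),
        eC ((r : ℂ) * (-(1 + (a : ℂ) * (b : ℂ)) * (b : ℂ) * (z : ℂ) ^ 2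
            + 2 * (z : ℂ) * ((y : ℂ) - (x : ℂ))
            + (a : ℂ) * (d : ℂ) * (y : ℂ) ^ 2) / (2 ^ k : ℂ)) := by
  obtain ⟨α, u, v, ha', hu, huv⟩ := exists_sqrt_one_add_mul_halves k ha hb
  have hd' : (d : ZMod (2 ^ k)) * (1 + a * b) = 1 := by
    exact_mod_cast
      (ZMod.intCast_eq_intCast_iff (d * (1 + a * b)) 1 (2 ^ k)).2 (by exact_mod_cast hd)
  have hL := sum_range_eC_eq_sum_stdAddChar (2 ^ k)
    (fun z ↦ r * (-b * z ^ 2 + 2 * z * (y - d * x) + a * d ^ 2 * x ^ 2))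
    (fun z ↦ r * (-b * z ^ 2 + 2 * z * (y - d * x) + a * d ^ 2 * x ^ 2)) fun _ ↦ by push_cast; rfl
  have hR := sum_range_eC_eq_sum_stdAddChar (2 ^ k)
    (fun z ↦ r * (-(1 + a * b) * b * z ^ 2 + 2 * z * (y - x) + a * d * y ^ 2))
    (fun z ↦ r * (-(1 + a * b) * b * z ^ 2 + 2 * z * (y - x) + a * d * y ^ 2))
    fun _ ↦ by push_cast; rfl
  push_cast at hL hR
  rw [hL, hR]
  exact sum_phase_eq_sum_phase _ ha' hu huv hd' _ _ _

/-- the Gauss-sum identity needed for multiplicativity of the propagators at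
the prime 2: for `r` odd, `4 ∣ a`, `4 ∣ b`, and `d(1+ab) ≡ 1 (mod 2^k)`, and all integers
`x`, `y`:
`∑_{z mod 2^k} e(r(-bz² + 2z(y-dx) + ad²x²)/2^k)
  = ∑_{z mod 2^k} e(r(-(1+ab)bz² + 2z(y-x) + ady²)/2^k)`. -/
theorem gauss_sum_identity (k : ℕ) (hk : 1 ≤ k) (r a b d : ℤ) (hr : Odd r)
    (ha : 4 ∣ a) (hb : 4 ∣ b) (hd : d * (1 + a * b) ≡ 1 [ZMOD (2 ^ k : ℤ)])
    (x y : ℤ) :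
    ∑ z ∈ Finset.range (2 ^ k),
        eC ((r : ℂ) * (-(b : ℂ) * (z : ℂ) ^ 2 + 2 * (z : ℂ) * ((y : ℂ) - (d : ℂ) * (x : ℂ))
            + (a : ℂ) * (d : ℂ) ^ 2 * (x : ℂ) ^ 2) / (2 ^ k : ℂ)) =
      ∑ z ∈ Finset.range (2 ^ k),
        eC ((r : ℂ) * (-(1 + (a : ℂ) * (b : ℂ)) * (b : ℂ) * (z : ℂ) ^ 2
            + 2 * (z : ℂ) * ((y : ℂ) - (x : ℂ))
            + (a : ℂ) * (d : ℂ) * (y : ℂ) ^ 2) / (2 ^ k : ℂ)) :=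
  gauss_sum_identity_general k r a b d ha hb hd x y
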